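/- arXiv:math/0610077 — 5 statements merged into one kernel-verified Lean document; each statement's English description precedes it below -/
import Mathlib

section
/- Let φ(z) = (Az+B)/(Cz+D) with A,B,C,D ∈ ℂ and AD−BC ≠ 0 be a linear-fractional map whose denominator Cz+D does not vanish on the closed unit disk, which maps 𝔻 into 𝔻 but not onto 𝔻, and suppose φ(ζ) = η for two distinct points ζ, η ∈ ∂𝔻. Let σ be the Krein adjoint of φ, and suppose b > 0 and c > 0 are real numbers such that ρ_{η,b}(𝔻) = φ(𝔻) and ρ_{ζ,c}(𝔻) = σ(𝔻) (equality of image sets). Then c = |φ'(ζ)|·b, and for every z ∈ 𝔻 one has φ(σ(z)) = ρ_{η,2b}(z) and σ(φ(z)) = ρ_{ζ,2c}(z). -/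
/-- The parabolic map `ρ_{γ,a}(z) = γ((2−a)z + aγ)/((2+a)γ − az)`. -/
noncomputable def rho (γ a z : ℂ) : ℂ := γ * ((2 - a) * z + a * γ) / ((2 + a) * γ - a * z)

/-!
A linear-fractional map `ψ(z) = (az + b)/(cz + d)` with `‖c‖ < ‖d‖` maps `𝔻` onto the disc of
center `(b d̄ - a c̄)/N` and radius `|ad - bc|/N`, `N = |d|² - |c|²`, and `ρ_{γ,t}(𝔻)` is the
horodisc of center `tγ/(1+t)` and radius `1/(1+t)`. The matrix of `ψ ∘ σ_ψ` is `M J M* J`,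
`J = diag(1, -1)`; its entries are `|a|² - |b|²`, `N` and `N` times the center, and
`(|a|² - |b|²) N = |ad - bc|² - |b d̄ - a c̄|²`, so `ψ ∘ σ_ψ` depends only on the disc `ψ(𝔻)`: for
the horodisc of parameter `t` at `γ` it is `ρ_{γ,2t}`. As `φ` is the Krein adjoint of `σ`, this
gives both composites. For the derivative, `φ(ζ) = η` factors `AD - BC = (A - ηC)(Cζ + D)`, the
center of `φ(𝔻)` forces `η̄ ζ (A - ηC) conj(Cζ + D) = |AD - BC|`, and the two radii then give
`c |Cζ + D|² = b |AD - BC|`.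
-/

open Complex Metric ComplexConjugate

section

variable {E : Type*} [NormedAddCommGroup E] [NormedSpace ℝ E] [Nontrivial E]

theorem dist_add_le_of_ball_subset_ball {x y : E} {r s : ℝ} (hr : 0 < r)
    (h : ball x r ⊆ ball y s) : dist x y + r ≤ s := by
  obtain ⟨v, hv, hxy⟩ : ∃ v : E, ‖v‖ = 1 ∧ x - y = ‖x - y‖ • v := by
    rcases eq_or_ne x y with rfl | hne
    · obtain ⟨v, hv⟩ := exists_norm_eq E zero_le_one
      exact ⟨v, hv, by simp⟩
    · have hne' : ‖x - y‖ ≠ 0 := norm_ne_zero_iff.mpr (sub_ne_zero.mpr hne)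
      refine ⟨‖x - y‖⁻¹ • (x - y), ?_, ?_⟩
      · rw [norm_smul, norm_inv, norm_norm, inv_mul_cancel₀ hne']
      · rw [smul_inv_smul₀ hne']
  have hclosed : closedBall x r ⊆ closedBall y s := by
    rw [← closure_ball x hr.ne']
    exact (closure_mono h).trans closure_ball_subset_closedBall
  have hmem : x + r • v ∈ closedBall y s := hclosed (by simp [norm_smul, hv, abs_of_pos hr])
  have hdist : x + r • v - y = (‖x - y‖ + r) • v := by
    rw [add_smul, ← hxy]; abel
  rwa [mem_closedBall, dist_eq_norm, hdist, norm_smul, hv, mul_one, Real.norm_eq_abs,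
    abs_of_nonneg (by positivity), ← dist_eq_norm] at hmem

theorem eq_and_eq_of_ball_eq_ball {x y : E} {r s : ℝ} (hr : 0 < r) (hs : 0 < s)
    (h : ball x r = ball y s) : x = y ∧ r = s := by
  have h₁ := dist_add_le_of_ball_subset_ball hr h.le
  have h₂ := dist_add_le_of_ball_subset_ball hs h.ge
  rw [dist_comm] at h₂
  exact ⟨dist_le_zero.mp (by linarith), by linarith [dist_nonneg (x := x) (y := y)]⟩

end

noncomputable def mobius (a b c d z : ℂ) : ℂ := (a * z + b) / (c * z + d)

noncomputable def kreinAdjoint (a b c d z : ℂ) : ℂ := (conj a * z - conj c) / (-conj b * z + conj d)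

noncomputable def mobiusCenter (a b c d : ℂ) : ℂ :=
  (b * conj d - a * conj c) / ((normSq d - normSq c : ℝ) : ℂ)

noncomputable def mobiusRadius (a b c d : ℂ) : ℝ := ‖a * d - b * c‖ / (normSq d - normSq c)

theorem forall_mul_add_ne_zero_iff {c d : ℂ} :
    (∀ z : ℂ, ‖z‖ ≤ 1 → c * z + d ≠ 0) ↔ ‖c‖ < ‖d‖ := by
  constructor
  · intro h
    by_contra! hdc
    rcases eq_or_ne c 0 with rfl | hc
    · exact h 0 (by simp) (by simpa using hdc)
    · refine h (-d / c) ?_ (by field_simp; ring)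
      rw [norm_div, norm_neg]
      exact div_le_one_of_le₀ hdc (norm_nonneg c)
  · intro hcd z hz h
    have : ‖d‖ = ‖c‖ * ‖z‖ := by rw [eq_neg_of_add_eq_zero_right h, norm_neg, norm_mul]
    nlinarith [norm_nonneg c]

section

variable {a b c d : ℂ}

theorem normSq_mul_add_sub_normSq (z : ℂ) :
    normSq (c * z + d) - normSq (conj d * z + conj c) = (normSq d - normSq c) * (1 - normSq z) := by
  simp only [normSq_apply, add_re, add_im, mul_re, mul_im, conj_re, conj_im]
  ring

theorem normSq_sub_normSq_pos (hcd : ‖c‖ < ‖d‖) : 0 < normSq d - normSq c := by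
  rw [← Complex.sq_norm, ← Complex.sq_norm]
  nlinarith [norm_nonneg c]

theorem norm_conj_mul_add_lt_iff (hcd : ‖c‖ < ‖d‖) (z : ℂ) :
    ‖conj d * z + conj c‖ < ‖c * z + d‖ ↔ ‖z‖ < 1 := by
  rw [← sq_lt_sq₀ (norm_nonneg _) (norm_nonneg _), Complex.sq_norm, Complex.sq_norm, ← sub_pos,
    normSq_mul_add_sub_normSq, mul_pos_iff_of_pos_left (normSq_sub_normSq_pos hcd), sub_pos,
    ← Complex.sq_norm, sq_lt_one_iff₀ (norm_nonneg z)]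

theorem mobius_sub_mobiusCenter (hN : normSq d ≠ normSq c) {z : ℂ} (hz : c * z + d ≠ 0) :
    mobius a b c d z - mobiusCenter a b c d =
      (a * d - b * c) * (conj d * z + conj c) /
        ((c * z + d) * ((normSq d - normSq c : ℝ) : ℂ)) := by
  have hN' : ((normSq d - normSq c : ℝ) : ℂ) ≠ 0 := ofReal_ne_zero.mpr (sub_ne_zero.mpr hN)
  rw [mobius, mobiusCenter, div_sub_div _ _ hz hN']
  push_cast
  rw [← mul_conj, ← mul_conj]
  ring

theorem dist_mobius_mobiusCenter_lt_iff (hcd : ‖c‖ < ‖d‖) (hdet : a * d - b * c ≠ 0) {z : ℂ}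
    (hz : c * z + d ≠ 0) :
    dist (mobius a b c d z) (mobiusCenter a b c d) < mobiusRadius a b c d ↔ ‖z‖ < 1 := by
  have hN := normSq_sub_normSq_pos hcd
  rw [dist_eq_norm, mobius_sub_mobiusCenter (sub_pos.mp hN).ne' hz, norm_div, norm_mul, norm_mul,
    norm_real, Real.norm_of_nonneg hN.le, mobiusRadius, div_lt_div_iff₀ (by positivity) hN,
    ← norm_conj_mul_add_lt_iff hcd z, mul_right_comm, mul_comm ‖c * z + d‖, ← mul_assoc,
    mul_lt_mul_iff_right₀ (mul_pos (norm_pos_iff.mpr hdet) hN)]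

theorem mul_mobius_add {w : ℂ} (hw : -c * w + a ≠ 0) :
    c * mobius d (-b) (-c) a w + d = (a * d - b * c) / (-c * w + a) := by
  rw [mobius, mul_div_assoc', div_add' _ _ _ hw]
  congr 1
  ring

theorem mobius_mobius_inverse (hdet : a * d - b * c ≠ 0) {w : ℂ} (hw : -c * w + a ≠ 0) :
    mobius a b c d (mobius d (-b) (-c) a w) = w := by
  rw [mobius, mul_mobius_add hw, mobius, mul_div_assoc', div_add' _ _ _ hw,
    div_div_div_cancel_right₀ hw, div_eq_iff hdet]
  ring

theorem neg_mul_add_ne_zero_of_dist_lt (hcd : ‖c‖ < ‖d‖) (hdet : a * d - b * c ≠ 0)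
    {w : ℂ} (hw : dist w (mobiusCenter a b c d) < mobiusRadius a b c d) : -c * w + a ≠ 0 := by
  intro h
  have hN := normSq_sub_normSq_pos hcd
  have hN' : ((normSq d - normSq c : ℝ) : ℂ) ≠ 0 := ofReal_ne_zero.mpr hN.ne'
  -- `a / c` is the image of `∞`, at distance `‖d‖ / ‖c‖` radii from the center
  have hinf : c * (w - mobiusCenter a b c d) =
      conj d * (a * d - b * c) / ((normSq d - normSq c : ℝ) : ℂ) := by
    obtain rfl : a = c * w := by linear_combination h
    rw [mobiusCenter, eq_div_iff hN']
    field_simp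
    push_cast
    rw [← mul_conj, ← mul_conj]
    ring
  have hr : 0 < mobiusRadius a b c d := div_pos (norm_pos_iff.mpr hdet) hN
  have hnorm : ‖c‖ * dist w (mobiusCenter a b c d) = ‖d‖ * mobiusRadius a b c d := by
    rw [dist_eq_norm, ← norm_mul, hinf, norm_div, norm_mul, norm_conj, norm_real,
      Real.norm_of_nonneg hN.le, mobiusRadius, mul_div_assoc]
  nlinarith [mul_le_mul_of_nonneg_left hw.le (norm_nonneg c), mul_lt_mul_of_pos_right hcd hr]

theorem image_mobius_ball (hcd : ‖c‖ < ‖d‖) (hdet : a * d - b * c ≠ 0) :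
    mobius a b c d '' ball 0 1 = ball (mobiusCenter a b c d) (mobiusRadius a b c d) := by
  have hden : ∀ z : ℂ, ‖z‖ ≤ 1 → c * z + d ≠ 0 := forall_mul_add_ne_zero_iff.mpr hcd
  ext w
  constructor
  · rintro ⟨z, hz, rfl⟩
    rw [mem_ball_zero_iff] at hz
    exact (dist_mobius_mobiusCenter_lt_iff hcd hdet (hden z hz.le)).mpr hz
  · intro hw
    have hw' := neg_mul_add_ne_zero_of_dist_lt hcd hdet hw
    have hz : c * mobius d (-b) (-c) a w + d ≠ 0 := by
      rw [mul_mobius_add hw']; exact div_ne_zero hdet hw'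
    refine ⟨mobius d (-b) (-c) a w, ?_, mobius_mobius_inverse hdet hw'⟩
    rw [mem_ball_zero_iff, ← dist_mobius_mobiusCenter_lt_iff hcd hdet hz,
      mobius_mobius_inverse hdet hw']
    exact hw

theorem mobius_mul_coeffs {k : ℂ} (hk : k ≠ 0) (z : ℂ) :
    mobius (k * a) (k * b) (k * c) (k * d) z = mobius a b c d z := by
  rw [mobius, mobius, ← mul_div_mul_left (a * z + b) _ hk]
  ring_nf

theorem mul_conj_eq_one {γ : ℂ} (hγ : ‖γ‖ = 1) : γ * conj γ = 1 := by
  rw [mul_conj, normSq_eq_norm_sq, hγ]; norm_num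

theorem rho_eq_mobius (γ a : ℂ) :
    rho γ a = mobius (γ * (2 - a)) (a * γ ^ 2) (-a) ((2 + a) * γ) := by
  funext z
  rw [rho, mobius]
  congr 1 <;> ring

theorem rho_two_mul_eq_mobius {γ : ℂ} (hγ : ‖γ‖ = 1) (a : ℂ) :
    rho γ (2 * a) = mobius (1 - a) (a * γ) (-a * conj γ) (1 + a) := by
  have hγ0 : 2 * γ ≠ 0 := mul_ne_zero two_ne_zero (by rintro rfl; simp at hγ)
  funext z
  rw [rho_eq_mobius]
  conv_rhs => rw [← mobius_mul_coeffs hγ0]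
  congr 1
  · ring
  · ring
  · linear_combination 2 * a * mul_conj_eq_one hγ
  · ring

theorem image_rho_ball {γ : ℂ} (hγ : ‖γ‖ = 1) {t : ℝ} (ht : 0 < t) :
    rho γ t '' ball 0 1 = ball (((t / (1 + t) : ℝ) : ℂ) * γ) (1 / (1 + t)) := by
  have hγ' := mul_conj_eq_one hγ
  have hnormSq : normSq γ = 1 := by rw [normSq_eq_norm_sq, hγ, one_pow]
  have hdet : γ * (2 - t) * ((2 + t) * γ) - t * γ ^ 2 * -t = 4 * γ ^ 2 := by ring
  have hN : normSq ((2 + t) * γ) - normSq (-(t : ℂ)) = 4 * (1 + t) := by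
    rw [normSq_mul, normSq_neg, hnormSq, ← ofReal_ofNat, ← ofReal_add, normSq_ofReal, normSq_ofReal]
    ring
  rw [rho_eq_mobius, image_mobius_ball, mobiusCenter, mobiusRadius, hdet, hN]
  · congr 1
    · simp only [map_mul, map_add, map_neg, conj_ofReal, map_ofNat]
      have h1t : 1 + (t : ℂ) ≠ 0 := by norm_cast; positivity
      push_cast
      field_simp
      linear_combination t * γ * (2 + t) * hγ'
    · rw [norm_mul, norm_pow, hγ]
      field_simp
      norm_num
  · rw [norm_neg, norm_mul, hγ, mul_one, norm_real, Real.norm_of_nonneg ht.le]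
    rw [← ofReal_ofNat, ← ofReal_add, norm_real, Real.norm_of_nonneg (by positivity)]
    linarith
  · rw [hdet]
    exact mul_ne_zero (by norm_num) (pow_ne_zero 2 (by rintro rfl; simp at hγ))

theorem kreinAdjoint_eq_mobius (a b c d : ℂ) :
    kreinAdjoint a b c d = mobius (conj a) (-conj c) (-conj b) (conj d) := by
  funext z
  rw [kreinAdjoint, mobius, sub_eq_add_neg]

theorem mobius_eq_kreinAdjoint (a b c d : ℂ) :
    mobius a b c d = kreinAdjoint (conj a) (-conj c) (-conj b) (conj d) := by
  funext z
  simp only [kreinAdjoint, mobius, conj_conj, map_neg, sub_neg_eq_add, neg_neg]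

theorem mobius_kreinAdjoint {z : ℂ} (hz : -conj b * z + conj d ≠ 0) :
    mobius a b c d (kreinAdjoint a b c d z) =
      mobius (normSq a - normSq b : ℝ) (b * conj d - a * conj c) (conj a * c - conj b * d)
        (normSq d - normSq c : ℝ) z := by
  rw [mobius, kreinAdjoint, mul_div_assoc', mul_div_assoc', div_add' _ _ _ hz, div_add' _ _ _ hz,
    div_div_div_cancel_right₀ hz, mobius]
  push_cast
  rw [← mul_conj, ← mul_conj, ← mul_conj, ← mul_conj]
  congr 1 <;> ring

theorem normSq_sub_mul_normSq_sub_add_normSq (a b c d : ℂ) :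
    (normSq a - normSq b) * (normSq d - normSq c) + normSq (b * conj d - a * conj c) =
      normSq (a * d - b * c) := by
  simp only [normSq_apply, sub_re, sub_im, mul_re, mul_im, conj_re, conj_im]
  ring

theorem coeffs_of_image_mobius_eq_image_rho (hcd : ‖c‖ < ‖d‖) (hdet : a * d - b * c ≠ 0)
    {γ : ℂ} (hγ : ‖γ‖ = 1) {t : ℝ} (ht : 0 < t)
    (h : mobius a b c d '' ball 0 1 = rho γ t '' ball 0 1) :
    (1 + t) * ‖a * d - b * c‖ = normSq d - normSq c ∧
      b * conj d - a * conj c = ((t * ‖a * d - b * c‖ : ℝ) : ℂ) * γ := by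
  have hN := normSq_sub_normSq_pos hcd
  rw [image_mobius_ball hcd hdet, image_rho_ball hγ ht] at h
  obtain ⟨hw, hr⟩ := eq_and_eq_of_ball_eq_ball (div_pos (norm_pos_iff.mpr hdet) hN)
    (by positivity) h
  have hrad : (1 + t) * ‖a * d - b * c‖ = normSq d - normSq c := by
    rw [div_eq_div_iff hN.ne' (by positivity)] at hr
    linarith
  refine ⟨hrad, ?_⟩
  rw [mobiusCenter, div_eq_iff (ofReal_ne_zero.mpr hN.ne'), ← hrad] at hw
  rw [hw]
  have h1t : 1 + (t : ℂ) ≠ 0 := by norm_cast; positivity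
  push_cast
  field_simp

theorem mobius_kreinAdjoint_eq_rho (hcd : ‖c‖ < ‖d‖) (hdet : a * d - b * c ≠ 0)
    {γ : ℂ} (hγ : ‖γ‖ = 1) {t : ℝ} (ht : 0 < t)
    (h : mobius a b c d '' ball 0 1 = rho γ t '' ball 0 1) {z : ℂ}
    (hz : -conj b * z + conj d ≠ 0) :
    mobius a b c d (kreinAdjoint a b c d z) = rho γ ((2 * t : ℝ) : ℂ) z := by
  obtain ⟨hrad, hcenter⟩ := coeffs_of_image_mobius_eq_image_rho hcd hdet hγ ht h
  set δ := ‖a * d - b * c‖ with hδ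
  have hδ0 : (δ : ℂ) ≠ 0 := ofReal_ne_zero.mpr (norm_pos_iff.mpr hdet).ne'
  have hab : normSq a - normSq b = (1 - t) * δ := by
    have key := normSq_sub_mul_normSq_sub_add_normSq a b c d
    rw [← hrad, hcenter, normSq_mul, normSq_ofReal, normSq_eq_norm_sq γ, hγ,
      normSq_eq_norm_sq (a * d - b * c), ← hδ] at key
    have : 0 < (1 + t) * δ := by positivity
    apply mul_right_cancel₀ this.ne'
    linear_combination key
  rw [mobius_kreinAdjoint hz, ofReal_mul, ofReal_ofNat, rho_two_mul_eq_mobius hγ]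
  conv_rhs => rw [← mobius_mul_coeffs hδ0]
  congr 1
  · rw [hab]; push_cast; ring
  · rw [hcenter]; push_cast; ring
  · have := congrArg conj hcenter
    simp only [map_sub, map_mul, conj_conj, conj_ofReal, ofReal_mul] at this
    linear_combination -this
  · rw [← hrad]; push_cast; ring

theorem hasDerivAt_mobius {z : ℂ} (hz : c * z + d ≠ 0) :
    HasDerivAt (mobius a b c d) ((a * d - b * c) / (c * z + d) ^ 2) z := by
  have h := (((hasDerivAt_id z).const_mul a).add_const b).div
    (((hasDerivAt_id z).const_mul c).add_const d) hz
  simp only [id, mul_one] at h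
  exact h.congr_deriv (by ring)

theorem horodisk_parameter_relation {ζ η : ℂ} {s t : ℝ} (hζ : ‖ζ‖ = 1) (hη : ‖η‖ = 1)
    (hdet : a * d - b * c ≠ 0) (hfix : a * ζ + b = η * (c * ζ + d))
    (hs : (1 + s) * ‖a * d - b * c‖ = normSq d - normSq c)
    (hcenter : b * conj d - a * conj c = ((s * ‖a * d - b * c‖ : ℝ) : ℂ) * η)
    (ht : (1 + t) * ‖a * d - b * c‖ = normSq d - normSq b) :
    t * normSq (c * ζ + d) = s * ‖a * d - b * c‖ := by
  have hζ' := mul_conj_eq_one hζ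
  have hη' := mul_conj_eq_one hη
  obtain rfl : b = η * d - ζ * (a - η * c) := by linear_combination hfix
  set δ := ‖a * d - (η * d - ζ * (a - η * c)) * c‖ with hδ
  have hδ0 : (δ : ℂ) ≠ 0 := ofReal_ne_zero.mpr (norm_pos_iff.mpr hdet).ne'
  have hδsq : (δ : ℂ) * δ =
      (a - η * c) * (c * ζ + d) * ((conj a - conj η * conj c) * (conj c * conj ζ + conj d)) := by
    rw [← ofReal_mul, ← sq, hδ, ← normSq_eq_norm_sq, ← mul_conj]
    simp only [map_sub, map_mul]
    ring
  have hs' : (1 + s) * (δ : ℂ) = d * conj d - c * conj c := by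
    rw [mul_conj, mul_conj]; exact_mod_cast hs
  have ht' : (1 + t) * (δ : ℂ) =
      d * conj d - (η * d - ζ * (a - η * c)) * conj (η * d - ζ * (a - η * c)) := by
    rw [mul_conj, mul_conj]; exact_mod_cast ht
  simp only [map_sub, map_mul] at ht'
  rw [ofReal_mul] at hcenter
  -- the left side is `|cζ + d|² ζ ψ'(ζ) / η` for `ψ = mobius a b c d`, so the angular
  -- derivative at `ζ` is positive
  have hphase : conj η * ζ * (conj c * conj ζ + conj d) * (a - η * c) = δ := by
    linear_combination -conj η * hcenter - hs'
      + (conj η * conj c * a - η * conj η * c * conj c) * hζ'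
      + (d * conj d - c * conj c - s * δ) * hη'
  have hphase' : η * conj ζ * (c * ζ + d) * (conj a - conj η * conj c) = δ := by
    simpa only [map_mul, map_add, map_sub, conj_conj, conj_ofReal] using congrArg conj hphase
  apply ofReal_injective
  apply mul_left_cancel₀ hδ0
  push_cast
  rw [← mul_conj]
  simp only [map_add, map_mul]
  -- with `u = cζ + d`, `v = a - ηc`, `P = η̄ ζ ū v`, `N_x = |d|² - |x|²`, modulo `|ζ| = |η| = 1`:
  -- `|u|² (N_b - δ) - δ (N_c - δ) = u d̄ (P - δ) + d ū (P̄ - δ) + (δ² - |u v|²)`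
  linear_combination ((c * ζ + d) * (conj c * conj ζ + conj d)) * ht' - δ * hs' + hδsq
    + d * (conj c * conj ζ + conj d) * hphase' + (c * ζ + d) * conj d * hphase
    - (c * ζ + d) * (conj c * conj ζ + conj d) * d * conj d * hη'
    - ((c * ζ + d) * (conj c * conj ζ + conj d) * (a - η * c) * (conj a - conj η * conj c)
      + δ * c * conj c) * hζ'

end

theorem stmt_0_general (A B C D : ℂ) (hdet : A * D - B * C ≠ 0)
    (φ σ : ℂ → ℂ)
    (hφ : ∀ z, φ z = (A * z + B) / (C * z + D))
    (hσ : ∀ z, σ z = ((starRingEnd ℂ) A * z - (starRingEnd ℂ) C) /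
      (-(starRingEnd ℂ) B * z + (starRingEnd ℂ) D))
    (hden : ∀ z : ℂ, ‖z‖ ≤ 1 → C * z + D ≠ 0)
    (hmaps : ∀ z : ℂ, ‖z‖ < 1 → ‖φ z‖ < 1)
    (ζ η : ℂ) (hζ : ‖ζ‖ = 1) (hη : ‖η‖ = 1)
    (hφζ : φ ζ = η)
    (b c : ℝ) (hb : 0 < b) (hc : 0 < c)
    (hbim : (fun z => rho η (b : ℂ) z) '' Metric.ball 0 1 = φ '' Metric.ball 0 1)
    (hcim : (fun z => rho ζ (c : ℂ) z) '' Metric.ball 0 1 = σ '' Metric.ball 0 1) :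
    c = ‖deriv φ ζ‖ * b ∧
      ∀ z ∈ Metric.ball (0 : ℂ) 1,
        φ (σ z) = rho η ((2 * b : ℝ) : ℂ) z ∧ σ (φ z) = rho ζ ((2 * c : ℝ) : ℂ) z := by
  obtain rfl : φ = mobius A B C D := funext hφ
  obtain rfl : σ = kreinAdjoint A B C D := funext hσ
  have hCD : ‖C‖ < ‖D‖ := forall_mul_add_ne_zero_iff.mp hden
  have hBD : ‖-conj B‖ < ‖conj D‖ := by
    have h0 := hmaps 0 (by simp)
    rwa [mobius, mul_zero, mul_zero, zero_add, zero_add, norm_div,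
      div_lt_one (norm_pos_iff.mpr (by simpa using hden 0 (by simp))), ← norm_conj B, ← norm_neg,
      ← norm_conj D] at h0
  have hdetσ : conj A * conj D - -conj C * -conj B = conj (A * D - B * C) := by
    simp only [map_sub, map_mul, neg_mul_neg]; ring
  have hdet' : conj A * conj D - -conj C * -conj B ≠ 0 := by
    rwa [hdetσ, map_ne_zero]
  have hσim : mobius (conj A) (-conj C) (-conj B) (conj D) '' ball 0 1 = rho ζ c '' ball 0 1 := by
    rw [← kreinAdjoint_eq_mobius]; exact hcim.symm
  refine ⟨?_, fun z hz => ⟨?_, ?_⟩⟩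
  · obtain ⟨hs, hcenter⟩ := coeffs_of_image_mobius_eq_image_rho hCD hdet hη hb hbim.symm
    obtain ⟨ht, -⟩ := coeffs_of_image_mobius_eq_image_rho hBD hdet' hζ hc hσim
    have hu : C * ζ + D ≠ 0 := hden ζ hζ.le
    have hfix : A * ζ + B = η * (C * ζ + D) := by rw [← hφζ, mobius, div_mul_cancel₀ _ hu]
    rw [hdetσ, norm_conj, normSq_conj, normSq_neg, normSq_conj] at ht
    have hrel := horodisk_parameter_relation hζ hη hdet hfix hs hcenter ht
    have hu2 : 0 < normSq (C * ζ + D) := normSq_pos.mpr hu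
    rw [(hasDerivAt_mobius hu).deriv, norm_div, norm_pow, ← normSq_eq_norm_sq, div_mul_eq_mul_div,
      eq_div_iff hu2.ne', hrel, mul_comm]
  · exact mobius_kreinAdjoint_eq_rho hCD hdet hη hb hbim.symm
      (forall_mul_add_ne_zero_iff.mpr hBD z (mem_ball_zero_iff.mp hz).le)
  · rw [kreinAdjoint_eq_mobius, mobius_eq_kreinAdjoint A B C D]
    exact mobius_kreinAdjoint_eq_rho hBD hdet' hζ hc hσim
      (by simpa using hden z (mem_ball_zero_iff.mp hz).le)

theorem stmt_0 (A B C D : ℂ) (hdet : A * D - B * C ≠ 0)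
    (φ σ : ℂ → ℂ)
    (hφ : ∀ z, φ z = (A * z + B) / (C * z + D))
    (hσ : ∀ z, σ z = ((starRingEnd ℂ) A * z - (starRingEnd ℂ) C) /
      (-(starRingEnd ℂ) B * z + (starRingEnd ℂ) D))
    (hden : ∀ z : ℂ, ‖z‖ ≤ 1 → C * z + D ≠ 0)
    (hmaps : ∀ z : ℂ, ‖z‖ < 1 → ‖φ z‖ < 1)
    (hnotonto : φ '' Metric.ball 0 1 ≠ Metric.ball 0 1)
    (ζ η : ℂ) (hζ : ‖ζ‖ = 1) (hη : ‖η‖ = 1) (hne : ζ ≠ η)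
    (hφζ : φ ζ = η)
    (b c : ℝ) (hb : 0 < b) (hc : 0 < c)
    (hbim : (fun z => rho η (b : ℂ) z) '' Metric.ball 0 1 = φ '' Metric.ball 0 1)
    (hcim : (fun z => rho ζ (c : ℂ) z) '' Metric.ball 0 1 = σ '' Metric.ball 0 1) :
    c = ‖deriv φ ζ‖ * b ∧
      ∀ z ∈ Metric.ball (0 : ℂ) 1,
        φ (σ z) = rho η ((2 * b : ℝ) : ℂ) z ∧ σ (φ z) = rho ζ ((2 * c : ℝ) : ℂ) z :=
  stmt_0_general A B C D hdet φ σ hφ hσ hden hmaps ζ η hζ hη hφζ b c hb hc hbim hcim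
end

section
/- Let H be a complex Hilbert space, let m and n be positive integers, and let T and S be bounded linear operators on H such that T^m = S^n and such that S = A + K for some positive bounded operator A and some compact operator K on H. Let λ be real with 0 < λ ≤ 1 and set μ = λ^{m/n} (the real power). Suppose (f_k) is a sequence of unit vectors in H converging weakly to 0 such that ‖(T − λI)f_k‖ → 0 as k → ∞. Then ‖(S − μI)f_k‖ → 0 as k → ∞. -/
/-!
Since `T fₖ ≈ λ fₖ`, also `Sⁿ fₖ = Tᵐ fₖ ≈ λᵐ fₖ = μⁿ fₖ`. A compact operator maps the bounded
weakly null sequence `(fₖ)` to a norm-null one, and `Sⁿ - Aⁿ` is compact, so `Aⁿ fₖ ≈ μⁿ fₖ`.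
Now `Aⁿ - μⁿ = P (A - μ)` with `P = ∑ μ^(n-1-i) Aⁱ ≥ μ^(n-1)` because the powers of `A` are
positive; hence `P` is bounded below and `A fₖ ≈ μ fₖ`. Finally `K fₖ → 0` gives `S fₖ ≈ μ fₖ`.
-/

open Filter Topology ContinuousLinearMap
open scoped InnerProductSpace NNReal

section PowerFactor

variable {𝕜 E : Type*} [NontriviallyNormedField 𝕜] [NormedAddCommGroup E] [NormedSpace 𝕜 E]

theorem ContinuousLinearMap.pow_apply_sub_smul_eq (T : E →L[𝕜] E) (c : 𝕜) (n : ℕ) (x : E) :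
    (T ^ n) x - c ^ n • x = (∑ i ∈ Finset.range n, c ^ (n - 1 - i) • T ^ i) (T x - c • x) := by
  have h := congrArg (fun U : E →L[𝕜] E => U x)
    (((Commute.one_right T).smul_right c).geom_sum₂_mul n)
  simpa [smul_pow, mul_smul_comm] using h.symm

theorem tendsto_pow_apply_sub_smul {T : E →L[𝕜] E} {c : 𝕜} {ι : Type*} {l : Filter ι}
    {f : ι → E} (h : Tendsto (fun k => T (f k) - c • f k) l (𝓝 0)) (n : ℕ) :
    Tendsto (fun k => (T ^ n) (f k) - c ^ n • f k) l (𝓝 0) := by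
  simpa only [pow_apply_sub_smul_eq, map_zero, Function.comp_def] using
    ((∑ i ∈ Finset.range n, c ^ (n - 1 - i) • T ^ i).continuous.tendsto 0).comp h

theorem IsCompactOperator.add_pow_sub_pow {A K : E →L[𝕜] E} (hK : IsCompactOperator K) (n : ℕ) :
    IsCompactOperator ⇑((A + K) ^ n - A ^ n) := by
  induction n with
  | zero => simpa using isCompactOperator_zero
  | succ n ih =>
    have e : (A + K) ^ (n + 1) - A ^ (n + 1) = ((A + K) ^ n - A ^ n) * A + (A + K) ^ n * K := by
      noncomm_ring
    rw [e, FunLike.coe_add]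
    exact (ih.comp_clm A).add (hK.clm_comp _)

end PowerFactor

section Hilbert

variable {𝕜 E F : Type*} [RCLike 𝕜] [NormedAddCommGroup E] [InnerProductSpace 𝕜 E]
  [NormedAddCommGroup F] [InnerProductSpace 𝕜 F]

theorem IsCompactOperator.tendsto_apply_zero_of_weakly_null [CompleteSpace E] [CompleteSpace F]
    {K : E →L[𝕜] F} (hK : IsCompactOperator K) {f : ℕ → E} {C : ℝ} (hb : ∀ k, ‖f k‖ ≤ C)
    (hweak : ∀ y, Tendsto (fun k => ⟪f k, y⟫_𝕜) atTop (𝓝 0)) :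
    Tendsto (fun k => K (f k)) atTop (𝓝 0) := by
  have hKweak : ∀ y, Tendsto (fun k => ⟪K (f k), y⟫_𝕜) atTop (𝓝 0) := fun y => by
    simpa only [adjoint_inner_right] using hweak (adjoint K y)
  refine tendsto_of_subseq_tendsto fun ns hns => ?_
  obtain ⟨a, -, φ, hφ, ha⟩ := (hK.isCompact_closure_image_closedBall C).tendsto_subseq
    (x := fun k => K (f (ns k))) fun k => subset_closure ⟨f (ns k), by simpa using hb (ns k), rfl⟩
  have ha0 : a = 0 := inner_self_eq_zero.1 <| tendsto_nhds_unique (ha.inner tendsto_const_nhds)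
    ((hKweak a).comp (hns.comp hφ.tendsto_atTop))
  exact ⟨φ, ha0 ▸ ha⟩

theorem antilipschitz_of_isPositive_sub_smul_one {P : E →L[𝕜] E} {c : ℝ≥0} (hc : 0 < c)
    (hP : (P - ((c : ℝ) : 𝕜) • 1).IsPositive) : AntilipschitzWith c⁻¹ P := by
  refine antilipschitz_of_forall_le_inner_map P hc fun x => ?_
  calc ‖x‖ ^ 2 * c = RCLike.re ⟪((c : ℝ) : 𝕜) • x, x⟫_𝕜 := by
        rw [inner_smul_left, RCLike.conj_ofReal, RCLike.re_ofReal_mul, inner_self_eq_norm_sq,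
          mul_comm]
    _ ≤ RCLike.re ⟪P x, x⟫_𝕜 := by
        simpa [inner_sub_left] using hP.re_inner_nonneg_left x
    _ ≤ ‖⟪P x, x⟫_𝕜‖ := RCLike.re_le_norm _

end Hilbert

section Positive

variable {H : Type*} [NormedAddCommGroup H] [InnerProductSpace ℂ H] [CompleteSpace H]

theorem ContinuousLinearMap.IsPositive.pow {A : H →L[ℂ] H} (hA : A.IsPositive) (i : ℕ) :
    (A ^ i).IsPositive := by
  rw [← nonneg_iff_isPositive] at hA ⊢
  exact CStarAlgebra.pow_nonneg hA i

theorem ContinuousLinearMap.IsPositive.tendsto_apply_sub_smul_of_tendsto_pow {A : H →L[ℂ] H}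
    (hA : A.IsPositive) {μ : ℝ} (hμ : 0 < μ) {n : ℕ} (hn : n ≠ 0) {ι : Type*} {l : Filter ι}
    {g : ι → H} (h : Tendsto (fun k => (A ^ n) (g k) - (μ : ℂ) ^ n • g k) l (𝓝 0)) :
    Tendsto (fun k => A (g k) - (μ : ℂ) • g k) l (𝓝 0) := by
  obtain ⟨n, rfl⟩ : ∃ k, n = k + 1 := ⟨n - 1, by omega⟩
  set P := ∑ i ∈ Finset.range (n + 1), (μ : ℂ) ^ (n + 1 - 1 - i) • A ^ i with hP_def
  set c : ℝ≥0 := ⟨μ ^ n, by positivity⟩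
  have hP : (P - ((c : ℝ) : ℂ) • 1).IsPositive := by
    have hP_sub : P - ((c : ℝ) : ℂ) • 1 =
        ∑ i ∈ Finset.range n, (μ : ℂ) ^ (n - (i + 1)) • A ^ (i + 1) := by
      rw [show ((c : ℝ) : ℂ) = (μ : ℂ) ^ n from Complex.ofReal_pow μ n, hP_def,
        Finset.sum_range_succ']
      simp
    rw [hP_sub]
    exact isPositive_sum _ fun i _ => (hA.pow _).smul_of_nonneg
      (by exact_mod_cast pow_nonneg hμ.le _)
  have hPinj := (antilipschitz_of_isPositive_sub_smul_one
    (show (0 : ℝ) < c from pow_pos hμ n) hP).isUniformInducing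
    P.uniformContinuous |>.isInducing
  rw [hPinj.tendsto_nhds_iff, map_zero]
  simpa only [Function.comp_def, pow_apply_sub_smul_eq] using h

end Positive

theorem stmt_3_general {H : Type*} [NormedAddCommGroup H] [InnerProductSpace ℂ H] [CompleteSpace H]
    (m n : ℕ) (hn : 1 ≤ n)
    (T S : H →L[ℂ] H) (hTS : T ^ m = S ^ n)
    (A K : H →L[ℂ] H) (hA : A.IsPositive) (hK : IsCompactOperator K) (hS : S = A + K)
    (lam : ℝ) (hlam0 : 0 < lam)
    (mu : ℝ) (hmu : mu = lam ^ ((m : ℝ) / (n : ℝ)))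
    (f : ℕ → H) (hf : ∀ k, ‖f k‖ = 1)
    (hweak : ∀ y : H, Filter.Tendsto (fun k => (⟪f k, y⟫_ℂ : ℂ)) Filter.atTop (nhds 0))
    (hT : Filter.Tendsto (fun k => ‖T (f k) - (lam : ℂ) • f k‖) Filter.atTop (nhds 0)) :
    Filter.Tendsto (fun k => ‖S (f k) - (mu : ℂ) • f k‖) Filter.atTop (nhds 0) := by
  have hmu_pow : (mu : ℂ) ^ n = (lam : ℂ) ^ m := by
    rw [hmu, ← Complex.ofReal_pow, ← Complex.ofReal_pow, ← Real.rpow_natCast,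
      ← Real.rpow_mul hlam0.le, div_mul_cancel₀ _ (by positivity), Real.rpow_natCast]
  have hb : ∀ k, ‖f k‖ ≤ 1 := fun k => (hf k).le
  have hSn : Tendsto (fun k => (S ^ n) (f k) - (mu : ℂ) ^ n • f k) atTop (𝓝 0) := by
    rw [← hTS, hmu_pow]
    exact tendsto_pow_apply_sub_smul (tendsto_zero_iff_norm_tendsto_zero.2 hT) m
  have hAn : Tendsto (fun k => (A ^ n) (f k) - (mu : ℂ) ^ n • f k) atTop (𝓝 0) := by
    have hcpt := (hS ▸ hK.add_pow_sub_pow (A := A) n).tendsto_apply_zero_of_weakly_null hb hweak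
    simpa using hSn.sub hcpt
  have hAf := hA.tendsto_apply_sub_smul_of_tendsto_pow (hmu ▸ Real.rpow_pos_of_pos hlam0 _)
    (by omega) hAn
  rw [← tendsto_zero_iff_norm_tendsto_zero]
  simpa [hS, sub_add_eq_add_sub] using hAf.add (hK.tendsto_apply_zero_of_weakly_null hb hweak)

theorem stmt_3 {H : Type*} [NormedAddCommGroup H] [InnerProductSpace ℂ H] [CompleteSpace H]
    (m n : ℕ) (hm : 1 ≤ m) (hn : 1 ≤ n)
    (T S : H →L[ℂ] H) (hTS : T ^ m = S ^ n)
    (A K : H →L[ℂ] H) (hA : A.IsPositive) (hK : IsCompactOperator K) (hS : S = A + K)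
    (lam : ℝ) (hlam0 : 0 < lam) (hlam1 : lam ≤ 1)
    (mu : ℝ) (hmu : mu = lam ^ ((m : ℝ) / (n : ℝ)))
    (f : ℕ → H) (hf : ∀ k, ‖f k‖ = 1)
    (hweak : ∀ y : H, Filter.Tendsto (fun k => (⟪f k, y⟫_ℂ : ℂ)) Filter.atTop (nhds 0))
    (hT : Filter.Tendsto (fun k => ‖T (f k) - (lam : ℂ) • f k‖) Filter.atTop (nhds 0)) :
    Filter.Tendsto (fun k => ‖S (f k) - (mu : ℂ) • f k‖) Filter.atTop (nhds 0) :=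
  stmt_3_general m n hn T S hTS A K hA hK hS lam hlam0 mu hmu f hf hweak hT
end

section
/- Let φ(z) = (Az+B)/(Cz+D) with AD−BC ≠ 0 be a linear-fractional map whose denominator does not vanish on the closed unit disk, which maps 𝔻 into 𝔻 but not onto 𝔻, and suppose φ(ζ) = η for distinct points ζ, η ∈ ∂𝔻. Let b > 0 be real with ρ_{η,b}(𝔻) = φ(𝔻). Let ψ(z) = (A'z+B')/(C'z+D') with A'D'−B'C' ≠ 0 be a linear-fractional map whose denominator does not vanish on the closed unit disk. Then the following are equivalent: (i) ψ maps 𝔻 into 𝔻 but not onto 𝔻, ψ(ζ) = η, and ψ'(ζ) = φ'(ζ); (ii) there exists a ∈ ℂ with Re a > −b such that ψ(z) = ρ_{η,a}(φ(z)) for every z ∈ 𝔻. -/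
open Set Filter Topology Metric

noncomputable def lft (A B C D z : ℂ) : ℂ := (A * z + B) / (C * z + D)

noncomputable def cayley (η w : ℂ) : ℂ := (η + w) / (η - w)

noncomputable def cayleyInv (η u : ℂ) : ℂ := η * (u - 1) / (u + 1)

section Cayley

variable {η u w a : ℂ}

lemma add_one_ne_zero_of_re_pos (hu : 0 < u.re) : u + 1 ≠ 0 := fun h => by
  have := congrArg Complex.re h
  simp only [Complex.add_re, Complex.one_re, Complex.zero_re] at this
  linarith

lemma ne_of_norm_lt_of_norm_eq (hη : ‖η‖ = 1) (hw : ‖w‖ < 1) : w ≠ η :=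
  ne_of_apply_ne norm (by rw [hη]; exact hw.ne)

lemma cayley_cayleyInv (hη : η ≠ 0) (hu : u + 1 ≠ 0) : cayley η (cayleyInv η u) = u := by
  unfold cayley cayleyInv
  field_simp
  ring

lemma cayleyInv_cayley (hη : η ≠ 0) (hw : w ≠ η) : cayleyInv η (cayley η w) = w := by
  have hηw : η - w ≠ 0 := sub_ne_zero.2 hw.symm
  unfold cayley cayleyInv
  rw [div_sub_one hηw, div_add_one hηw, ← mul_div_assoc, div_div_div_cancel_right₀ hηw,
    show η + w - (η - w) = 2 * w by ring, show η + w + (η - w) = 2 * η by ring]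
  field_simp

lemma rho_eq_cayleyInv (hw : w ≠ η) : rho η a w = cayleyInv η (cayley η w + a) := by
  have hηw : η - w ≠ 0 := sub_ne_zero.2 hw.symm
  unfold rho cayley cayleyInv
  field_simp
  ring_nf

lemma cayley_rho (hη : η ≠ 0) (hw : w ≠ η) (h : 0 < (cayley η w + a).re) :
    cayley η (rho η a w) = cayley η w + a := by
  rw [rho_eq_cayleyInv hw, cayley_cayleyInv hη (add_one_ne_zero_of_re_pos h)]

lemma re_cayley : (cayley η w).re = (‖η‖ ^ 2 - ‖w‖ ^ 2) / ‖η - w‖ ^ 2 := by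
  unfold cayley
  rw [Complex.div_re, ← add_div, Complex.sq_norm, Complex.sq_norm, Complex.sq_norm]
  simp only [Complex.normSq_apply, Complex.add_re, Complex.sub_re, Complex.add_im, Complex.sub_im]
  ring_nf

lemma re_cayley_pos (hη : ‖η‖ = 1) (hw : ‖w‖ < 1) : 0 < (cayley η w).re := by
  have hηw : η - w ≠ 0 := sub_ne_zero.2 (ne_of_norm_lt_of_norm_eq hη hw).symm
  rw [re_cayley, hη]
  have := norm_nonneg w
  exact div_pos (by nlinarith) (pow_pos (norm_pos_iff.2 hηw) 2)

lemma norm_cayleyInv_lt_one (hη : ‖η‖ = 1) (hu : 0 < u.re) : ‖cayleyInv η u‖ < 1 := by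
  unfold cayleyInv
  rw [norm_div, norm_mul, hη, one_mul,
    div_lt_one (norm_pos_iff.2 (add_one_ne_zero_of_re_pos hu))]
  apply lt_of_pow_lt_pow_left₀ 2 (norm_nonneg _)
  rw [Complex.sq_norm, Complex.sq_norm, Complex.normSq_apply, Complex.normSq_apply]
  simp only [Complex.sub_re, Complex.sub_im, Complex.add_re, Complex.add_im, Complex.one_re,
    Complex.one_im]
  nlinarith

lemma norm_rho_lt_one (hη : ‖η‖ = 1) (hw : w ≠ η) (h : 0 < (cayley η w + a).re) :
    ‖rho η a w‖ < 1 := by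
  rw [rho_eq_cayleyInv hw]
  exact norm_cayleyInv_lt_one hη h

lemma image_cayley_ball (hη : ‖η‖ = 1) : cayley η '' ball 0 1 = {u | 0 < u.re} := by
  have hη0 : η ≠ 0 := ne_zero_of_norm_ne_zero (hη ▸ one_ne_zero)
  ext u
  constructor
  · rintro ⟨w, hw, rfl⟩
    exact re_cayley_pos hη (mem_ball_zero_iff.1 hw)
  · intro hu
    exact ⟨cayleyInv η u, mem_ball_zero_iff.2 (norm_cayleyInv_lt_one hη hu),
      cayley_cayleyInv hη0 (add_one_ne_zero_of_re_pos hu)⟩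

lemma injOn_cayley_ball (hη : ‖η‖ = 1) : InjOn (cayley η) (ball 0 1) := by
  have hη0 : η ≠ 0 := ne_zero_of_norm_ne_zero (hη ▸ one_ne_zero)
  exact LeftInvOn.injOn fun w hw =>
    cayleyInv_cayley hη0 (ne_of_norm_lt_of_norm_eq hη (mem_ball_zero_iff.1 hw))

lemma image_cayley_image_of_eq_add {f g : ℂ → ℂ} {s : Set ℂ} {c : ℝ}
    (hfg : ∀ z ∈ s, cayley η (g z) = cayley η (f z) + a)
    (hf : cayley η '' (f '' s) = {u | c < u.re}) :
    cayley η '' (g '' s) = {u | c + a.re < u.re} := by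
  rw [image_image, image_congr hfg, ← image_image (· + a) (fun z => cayley η (f z)),
    ← image_image (cayley η) f, hf, image_add_right]
  ext u
  simp only [mem_preimage, mem_ofPred_eq, Complex.add_re, Complex.neg_re]
  constructor <;> intro h <;> linarith

lemma rho_comp_of_image_cayley {f : ℂ → ℂ} {s : Set ℂ} {c : ℝ} (hη : ‖η‖ = 1)
    (hf : ∀ z ∈ s, f z ≠ η) (himg : cayley η '' (f '' s) = {u | c < u.re}) (ha : 0 ≤ c + a.re) :
    MapsTo (rho η a ∘ f) s (ball 0 1) ∧
      ∀ z ∈ s, cayley η (rho η a (f z)) = cayley η (f z) + a := by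
  have hre : ∀ z ∈ s, 0 < (cayley η (f z) + a).re := fun z hz => by
    have hmem := mem_image_of_mem (cayley η) (mem_image_of_mem f hz)
    rw [himg, mem_ofPred_eq] at hmem
    rw [Complex.add_re]
    linarith
  have hη0 : η ≠ 0 := ne_zero_of_norm_ne_zero (hη ▸ one_ne_zero)
  exact ⟨fun z hz => mem_ball_zero_iff.2 (norm_rho_lt_one hη (hf z hz) (hre z hz)),
    fun z hz => cayley_rho hη0 (hf z hz) (hre z hz)⟩

lemma image_cayley_image_rho (hη : ‖η‖ = 1) (ha : 0 ≤ a.re) :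
    cayley η '' (rho η a '' ball 0 1) = {u | a.re < u.re} := by
  have hid : cayley η '' (id '' ball 0 1) = {u | 0 < u.re} := by
    rw [image_id]
    exact image_cayley_ball hη
  have hshift := (rho_comp_of_image_cayley hη
    (fun w hw => ne_of_norm_lt_of_norm_eq hη (mem_ball_zero_iff.1 hw)) hid (by simpa using ha)).2
  rw [← zero_add a.re]
  exact image_cayley_image_of_eq_add hshift hid

lemma pos_iff_image_ne_ball {g : ℂ → ℂ} {c : ℝ} (hη : ‖η‖ = 1)
    (hg : MapsTo g (ball 0 1) (ball 0 1)) (himg : cayley η '' (g '' ball 0 1) = {u | c < u.re}) :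
    0 < c ↔ g '' ball 0 1 ≠ ball 0 1 := by
  have hc : 0 ≤ c := by
    by_contra! hc
    have hmem : ((c / 2 : ℝ) : ℂ) ∈ cayley η '' (g '' ball 0 1) := by
      rw [himg, mem_ofPred_eq, Complex.ofReal_re]
      linarith
    have := image_mono hg.image_subset hmem
    rw [image_cayley_ball hη, mem_ofPred_eq, Complex.ofReal_re] at this
    linarith
  rw [hc.lt_iff_ne', ne_eq, ne_eq, not_iff_not,
    ← (injOn_cayley_ball hη).image_eq_image_iff hg.image_subset subset_rfl, himg,
    image_cayley_ball hη]
  constructor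
  · rintro rfl
    rfl
  · intro h
    have hmem : (c : ℂ) ∉ {u : ℂ | c < u.re} := by simp
    rw [h, mem_ofPred_eq, Complex.ofReal_re, not_lt] at hmem
    linarith

end Cayley

section LinearFractional

variable {A B C D A' B' C' D' ζ η z : ℂ}

lemma hasDerivAt_lft (h : C * z + D ≠ 0) :
    HasDerivAt (lft A B C D) ((A * D - B * C) / (C * z + D) ^ 2) z := by
  have hnum : HasDerivAt (fun z => A * z + B) A z := by
    simpa using ((hasDerivAt_id z).const_mul A).add_const B
  have hden : HasDerivAt (fun z => C * z + D) C z := by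
    simpa using ((hasDerivAt_id z).const_mul C).add_const D
  exact (hnum.div hden h).congr_deriv (by ring)

lemma analyticAt_lft (h : C * z + D ≠ 0) : AnalyticAt ℂ (lft A B C D) z := by
  unfold lft
  fun_prop (disch := exact h)

lemma rho_eq_lft (a : ℂ) : rho η a = lft ((2 - a) * η) (a * η ^ 2) (-a) ((2 + a) * η) := by
  ext z
  unfold rho lft
  congr 1 <;> ring

lemma rho_self (a : ℂ) (hη : η ≠ 0) : rho η a η = η := by
  unfold rho
  rw [show (2 + a) * η - a * η = 2 * η by ring]
  field_simp
  ring

lemma hasDerivAt_rho_self (a : ℂ) (hη : η ≠ 0) : HasDerivAt (rho η a) 1 η := by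
  have hden : -a * η + (2 + a) * η ≠ 0 := by
    rw [show -a * η + (2 + a) * η = 2 * η by ring]
    exact mul_ne_zero two_ne_zero hη
  convert rho_eq_lft a ▸ hasDerivAt_lft hden using 1
  field_simp
  ring

lemma analyticAt_rho_self (a : ℂ) (hη : η ≠ 0) : AnalyticAt ℂ (rho η a) η := by
  rw [rho_eq_lft]
  refine analyticAt_lft ?_
  rw [show -a * η + (2 + a) * η = 2 * η by ring]
  exact mul_ne_zero two_ne_zero hη

lemma cayley_lft (hdet : A * D - B * C ≠ 0) (hζ : C * ζ + D ≠ 0)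
    (hz : C * z + D ≠ 0) (hzζ : z ≠ ζ) (hfix : lft A B C D ζ = η) :
    cayley η (lft A B C D z) =
      (A + η * C) / (η * C - A) - 2 * η / (deriv (lft A B C D) ζ * (z - ζ)) := by
  rw [(hasDerivAt_lft hζ).deriv]
  obtain rfl : B = η * (C * ζ + D) - A * ζ := by
    unfold lft at hfix
    rw [div_eq_iff hζ] at hfix
    linear_combination hfix
  have hηCA : η * C - A ≠ 0 := fun h => hdet (by linear_combination (-(C * ζ + D)) * h)
  have hzζ' : z - ζ ≠ 0 := sub_ne_zero.2 hzζ
  have hdet_eq : A * D - (η * (C * ζ + D) - A * ζ) * C = -((η * C - A) * (C * ζ + D)) := by ring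
  have hsub : η - lft A (η * (C * ζ + D) - A * ζ) C D z =
      (η * C - A) * (z - ζ) / (C * z + D) := by
    unfold lft
    rw [eq_div_iff hz, sub_mul, div_mul_cancel₀ _ hz]
    ring
  have hadd : η + lft A (η * (C * ζ + D) - A * ζ) C D z =
      ((A + η * C) * (z - ζ) + 2 * η * (C * ζ + D)) / (C * z + D) := by
    unfold lft
    rw [eq_div_iff hz, add_mul, div_mul_cancel₀ _ hz]
    ring
  unfold cayley
  rw [hsub, hadd, div_div_div_cancel_right₀ hz, hdet_eq]
  field_simp
  ring

lemma exists_cayley_lft_eq_add (hdet : A * D - B * C ≠ 0) (hdet' : A' * D' - B' * C' ≠ 0)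
    (hζ : C * ζ + D ≠ 0) (hζ' : C' * ζ + D' ≠ 0) (hfix : lft A B C D ζ = η)
    (hfix' : lft A' B' C' D' ζ = η) (hderiv : deriv (lft A' B' C' D') ζ = deriv (lft A B C D) ζ) :
    ∃ a, ∀ z, C * z + D ≠ 0 → C' * z + D' ≠ 0 → z ≠ ζ →
      cayley η (lft A' B' C' D' z) = cayley η (lft A B C D z) + a := by
  refine ⟨(A' + η * C') / (η * C' - A') - (A + η * C) / (η * C - A), fun z hz hz' hzζ => ?_⟩
  rw [cayley_lft hdet' hζ' hz' hzζ hfix', cayley_lft hdet hζ hz hzζ hfix, hderiv]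
  ring

lemma eventuallyEq_of_eqOn_ball {f g : ℂ → ℂ} (hζ : ‖ζ‖ = 1) (hf : AnalyticAt ℂ f ζ)
    (hg : AnalyticAt ℂ g ζ) (hfg : EqOn f g (ball 0 1)) : f =ᶠ[𝓝 ζ] g := by
  refine (hf.frequently_eq_iff_eventually_eq hg).1 (Frequently.mono ?_ hfg)
  rw [← mem_closure_ne_iff_frequently_within,
    sdiff_singleton_eq_self (by simp [hζ]), closure_ball _ one_ne_zero]
  simp [hζ]

lemma lft_apply_eq_and_deriv_eq_of_eqOn_rho_comp {a : ℂ} (hζ : ‖ζ‖ = 1) (hη : η ≠ 0)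
    (hden : C * ζ + D ≠ 0) (hden' : C' * ζ + D' ≠ 0) (hfix : lft A B C D ζ = η)
    (h : EqOn (lft A' B' C' D') (rho η a ∘ lft A B C D) (ball 0 1)) :
    lft A' B' C' D' ζ = η ∧ deriv (lft A' B' C' D') ζ = deriv (lft A B C D) ζ := by
  have hρ_an : AnalyticAt ℂ (rho η a) (lft A B C D ζ) := hfix.symm ▸ analyticAt_rho_self a hη
  have hρ_deriv : HasDerivAt (rho η a) 1 (lft A B C D ζ) := hfix.symm ▸ hasDerivAt_rho_self a hη
  have hloc : lft A' B' C' D' =ᶠ[𝓝 ζ] rho η a ∘ lft A B C D :=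
    eventuallyEq_of_eqOn_ball hζ (analyticAt_lft hden') (hρ_an.comp (analyticAt_lft hden)) h
  refine ⟨?_, ?_⟩
  · rw [hloc.eq_of_nhds, Function.comp_apply, hfix, rho_self a hη]
  · rw [hloc.deriv_eq, (hρ_deriv.comp ζ (hasDerivAt_lft hden)).deriv, one_mul,
      (hasDerivAt_lft hden).deriv]

end LinearFractional

theorem stmt_5_general (A B C D A' B' C' D' : ℂ)
    (hdet : A * D - B * C ≠ 0) (hdet' : A' * D' - B' * C' ≠ 0)
    (φ ψ : ℂ → ℂ)
    (hφ : ∀ z, φ z = (A * z + B) / (C * z + D))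
    (hψ : ∀ z, ψ z = (A' * z + B') / (C' * z + D'))
    (hden : ∀ z : ℂ, ‖z‖ ≤ 1 → C * z + D ≠ 0)
    (hden' : ∀ z : ℂ, ‖z‖ ≤ 1 → C' * z + D' ≠ 0)
    (hmaps : ∀ z : ℂ, ‖z‖ < 1 → ‖φ z‖ < 1)
    (ζ η : ℂ) (hζ : ‖ζ‖ = 1) (hη : ‖η‖ = 1)
    (hφζ : φ ζ = η)
    (b : ℝ) (hb : 0 < b)
    (hbim : (fun z => rho η (b : ℂ) z) '' Metric.ball 0 1 = φ '' Metric.ball 0 1) :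
    ((∀ z : ℂ, ‖z‖ < 1 → ‖ψ z‖ < 1) ∧
        ψ '' Metric.ball 0 1 ≠ Metric.ball 0 1 ∧ ψ ζ = η ∧ deriv ψ ζ = deriv φ ζ) ↔
      ∃ a : ℂ, -b < a.re ∧ ∀ z ∈ Metric.ball (0 : ℂ) 1, ψ z = rho η a (φ z) := by
  obtain rfl : φ = lft A B C D := funext hφ
  obtain rfl : ψ = lft A' B' C' D' := funext hψ
  have hη0 : η ≠ 0 := ne_zero_of_norm_ne_zero (hη ▸ one_ne_zero)
  have hφimg : cayley η '' (lft A B C D '' ball 0 1) = {u | b < u.re} := by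
    rw [← hbim]
    simpa using image_cayley_image_rho hη (a := b) (by simpa using hb.le)
  constructor
  · rintro ⟨hψB, hψonto, hψζ, hderiv⟩
    obtain ⟨a, ha⟩ := exists_cayley_lft_eq_add hdet hdet' (hden ζ hζ.le) (hden' ζ hζ.le) hφζ hψζ
      hderiv
    have hshift : ∀ z ∈ ball (0 : ℂ) 1,
        cayley η (lft A' B' C' D' z) = cayley η (lft A B C D z) + a := fun z hz => by
      have hz1 := mem_ball_zero_iff.1 hz
      exact ha z (hden z hz1.le) (hden' z hz1.le) (ne_of_norm_lt_of_norm_eq hζ hz1)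
    have hψB' : MapsTo (lft A' B' C' D') (ball 0 1) (ball 0 1) := fun z hz =>
      mem_ball_zero_iff.2 (hψB z (mem_ball_zero_iff.1 hz))
    refine ⟨a, ?_, fun z hz => ?_⟩
    · linarith [(pos_iff_image_ne_ball hη hψB' (image_cayley_image_of_eq_add hshift hφimg)).2
        hψonto]
    · have hz1 := mem_ball_zero_iff.1 hz
      rw [rho_eq_cayleyInv (ne_of_norm_lt_of_norm_eq hη (hmaps z hz1)), ← hshift z hz,
        cayleyInv_cayley hη0 (ne_of_norm_lt_of_norm_eq hη (hψB z hz1))]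
  · rintro ⟨a, ha, hψφ⟩
    obtain ⟨hρB, hρshift⟩ := rho_comp_of_image_cayley (a := a) hη
      (fun z hz => ne_of_norm_lt_of_norm_eq hη (hmaps z (mem_ball_zero_iff.1 hz))) hφimg
      (by linarith)
    have hψB : MapsTo (lft A' B' C' D') (ball 0 1) (ball 0 1) := fun z hz => hψφ z hz ▸ hρB hz
    have hshift : ∀ z ∈ ball (0 : ℂ) 1,
        cayley η (lft A' B' C' D' z) = cayley η (lft A B C D z) + a := fun z hz =>
      hψφ z hz ▸ hρshift z hz
    refine ⟨fun z hz => mem_ball_zero_iff.1 (hψB (mem_ball_zero_iff.2 hz)),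
      (pos_iff_image_ne_ball hη hψB (image_cayley_image_of_eq_add hshift hφimg)).1 (by linarith),
      lft_apply_eq_and_deriv_eq_of_eqOn_rho_comp hζ hη0 (hden ζ hζ.le) (hden' ζ hζ.le) hφζ
        fun z hz => hψφ z hz⟩

theorem stmt_5 (A B C D A' B' C' D' : ℂ)
    (hdet : A * D - B * C ≠ 0) (hdet' : A' * D' - B' * C' ≠ 0)
    (φ ψ : ℂ → ℂ)
    (hφ : ∀ z, φ z = (A * z + B) / (C * z + D))
    (hψ : ∀ z, ψ z = (A' * z + B') / (C' * z + D'))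
    (hden : ∀ z : ℂ, ‖z‖ ≤ 1 → C * z + D ≠ 0)
    (hden' : ∀ z : ℂ, ‖z‖ ≤ 1 → C' * z + D' ≠ 0)
    (hmaps : ∀ z : ℂ, ‖z‖ < 1 → ‖φ z‖ < 1)
    (hnotonto : φ '' Metric.ball 0 1 ≠ Metric.ball 0 1)
    (ζ η : ℂ) (hζ : ‖ζ‖ = 1) (hη : ‖η‖ = 1) (hne : ζ ≠ η)
    (hφζ : φ ζ = η)
    (b : ℝ) (hb : 0 < b)
    (hbim : (fun z => rho η (b : ℂ) z) '' Metric.ball 0 1 = φ '' Metric.ball 0 1) :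
    ((∀ z : ℂ, ‖z‖ < 1 → ‖ψ z‖ < 1) ∧
        ψ '' Metric.ball 0 1 ≠ Metric.ball 0 1 ∧ ψ ζ = η ∧ deriv ψ ζ = deriv φ ζ) ↔
      ∃ a : ℂ, -b < a.re ∧ ∀ z ∈ Metric.ball (0 : ℂ) 1, ψ z = rho η a (φ z) :=
  stmt_5_general A B C D A' B' C' D' hdet hdet' φ ψ hφ hψ hden hden' hmaps ζ η hζ hη hφζ b hb hbim
end

section
/- Let n ≥ 1, let w₁, …, w_n ∈ ℂ with Re(wₖ) > 0 for each k, and let c₁, …, c_n ∈ ℂ. Then Σ_{i=1}^n Σ_{j=1}^n conj(cᵢ)·c_j/(conj(wᵢ) + w_j) = ∫₀¹ |Σ_{k=1}^n cₖ·exp(wₖ·log t)|² · t^{−1} dt, where the integrand is defined for 0 < t < 1 and the integral is finite. -/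
open MeasureTheory Set Complex ComplexConjugate

/-!
Writing `f t = ∑ cₖ t^{wₖ}`, one has `|f t|² t⁻¹ = ∑ᵢ ∑ⱼ conj(cᵢ) cⱼ t^{conj wᵢ + wⱼ - 1}` for
`t > 0`, and each of these finitely many terms is integrable on `(0, 1)` with
`∫₀¹ t^{a - 1} dt = 1 / a` as soon as `Re a > 0`.
-/

lemma integrableOn_cpow_sub_one_Ioo {a : ℂ} (ha : 0 < a.re) :
    IntegrableOn (fun t : ℝ => (t : ℂ) ^ (a - 1)) (Ioo 0 1) := by
  have hre : -1 < (a - 1).re := by simp [ha]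
  have h := intervalIntegral.intervalIntegrable_cpow' (a := 0) (b := 1) hre
  rw [intervalIntegrable_iff_integrableOn_Ioc_of_le zero_le_one] at h
  exact (integrableOn_Ioc_iff_integrableOn_Ioo (hb := enorm_ne_top)).mp h

lemma integral_cpow_sub_one_Ioo {a : ℂ} (ha : 0 < a.re) :
    ∫ t in Ioo (0 : ℝ) 1, (t : ℂ) ^ (a - 1) = 1 / a := by
  have hre : -1 < (a - 1).re := by simp [ha]
  have ha0 : a ≠ 0 := by rintro rfl; simp at ha
  rw [← integral_Ioc_eq_integral_Ioo, ← intervalIntegral.integral_of_le zero_le_one,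
    integral_cpow (Or.inl hre)]
  simp [zero_cpow ha0]

lemma integrableOn_sum_mul_cpow_sub_one_Ioo {κ : Type*} (s : Finset κ) (b a : κ → ℂ)
    (ha : ∀ k ∈ s, 0 < (a k).re) :
    IntegrableOn (fun t : ℝ => ∑ k ∈ s, b k * (t : ℂ) ^ (a k - 1)) (Ioo 0 1) :=
  integrable_finsetSum _ fun k hk => (integrableOn_cpow_sub_one_Ioo (ha k hk)).const_mul _

lemma integral_sum_mul_cpow_sub_one_Ioo {κ : Type*} (s : Finset κ) (b a : κ → ℂ)
    (ha : ∀ k ∈ s, 0 < (a k).re) :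
    ∫ t in Ioo (0 : ℝ) 1, ∑ k ∈ s, b k * (t : ℂ) ^ (a k - 1) = ∑ k ∈ s, b k / a k := by
  rw [integral_finsetSum _ fun k hk => (integrableOn_cpow_sub_one_Ioo (ha k hk)).const_mul _]
  refine Finset.sum_congr rfl fun k hk => ?_
  rw [integral_const_mul, integral_cpow_sub_one_Ioo (ha k hk), mul_one_div]

lemma ofReal_cpow_eq_exp_mul_log {t : ℝ} (ht : 0 < t) (z : ℂ) :
    (t : ℂ) ^ z = exp (z * Real.log t) := by
  rw [cpow_def_of_ne_zero (ofReal_ne_zero.mpr ht.ne'), ← ofReal_log ht.le, mul_comm]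

lemma sq_norm_sum_mul_exp_mul_log_mul_inv {ι : Type*} [Fintype ι] (c w : ι → ℂ) {t : ℝ}
    (ht : 0 < t) :
    ((‖∑ k, c k * exp (w k * Real.log t)‖ ^ 2 * t⁻¹ : ℝ) : ℂ) =
      ∑ p : ι × ι, conj (c p.1) * c p.2 * (t : ℂ) ^ (conj (w p.1) + w p.2 - 1) := by
  have hpow : ∀ i j, (t : ℂ) ^ (conj (w i) + w j - 1) =
      conj (exp (w i * Real.log t)) * exp (w j * Real.log t) * (t : ℂ)⁻¹ := by
    intro i j
    rw [cpow_sub _ _ (ofReal_ne_zero.mpr ht.ne'), cpow_one, ofReal_cpow_eq_exp_mul_log ht,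
      add_mul, exp_add, ← exp_conj, map_mul, conj_ofReal, div_eq_mul_inv]
  simp only [Fintype.sum_prod_type, hpow]
  push_cast
  rw [← conj_mul', map_sum, Finset.sum_mul_sum]
  simp only [Finset.sum_mul, map_mul]
  exact Finset.sum_congr rfl fun i _ => Finset.sum_congr rfl fun j _ => by ring

theorem stmt_16_general (n : ℕ) (w c : Fin n → ℂ) (hw : ∀ k, 0 < (w k).re) :
    IntegrableOn
      (fun t : ℝ => ‖∑ k, c k * Complex.exp (w k * Real.log t)‖ ^ 2 * t⁻¹)
      (Set.Ioo 0 1) volume ∧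
    ∑ i, ∑ j, (starRingEnd ℂ) (c i) * c j / ((starRingEnd ℂ) (w i) + w j) =
      ((∫ t in Set.Ioo (0 : ℝ) 1,
        ‖∑ k, c k * Complex.exp (w k * Real.log t)‖ ^ 2 * t⁻¹ : ℝ) : ℂ) := by
  set g : ℝ → ℝ := fun t => ‖∑ k, c k * exp (w k * Real.log t)‖ ^ 2 * t⁻¹
  set b : Fin n × Fin n → ℂ := fun p => conj (c p.1) * c p.2
  set a : Fin n × Fin n → ℂ := fun p => conj (w p.1) + w p.2
  have ha : ∀ p ∈ Finset.univ, 0 < (a p).re := fun p _ => by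
    simpa [a] using add_pos (hw p.1) (hw p.2)
  have hg : EqOn (fun t : ℝ => ∑ p, b p * (t : ℂ) ^ (a p - 1)) (fun t => (g t : ℂ)) (Ioo 0 1) :=
    fun t ht => (sq_norm_sum_mul_exp_mul_log_mul_inv c w ht.1).symm
  have hgC : IntegrableOn (fun t => (g t : ℂ)) (Ioo 0 1) :=
    (integrableOn_sum_mul_cpow_sub_one_Ioo _ b a ha).congr_fun hg measurableSet_Ioo
  refine ⟨hgC.re, ?_⟩
  rw [← integral_complex_ofReal, ← setIntegral_congr_fun measurableSet_Ioo hg,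
    integral_sum_mul_cpow_sub_one_Ioo _ b a ha, Fintype.sum_prod_type]

theorem stmt_16 (n : ℕ) (hn : 1 ≤ n) (w c : Fin n → ℂ) (hw : ∀ k, 0 < (w k).re) :
    IntegrableOn
      (fun t : ℝ => ‖∑ k, c k * Complex.exp (w k * Real.log t)‖ ^ 2 * t⁻¹)
      (Set.Ioo 0 1) volume ∧
    ∑ i, ∑ j, (starRingEnd ℂ) (c i) * c j / ((starRingEnd ℂ) (w i) + w j) =
      ((∫ t in Set.Ioo (0 : ℝ) 1,
        ‖∑ k, c k * Complex.exp (w k * Real.log t)‖ ^ 2 * t⁻¹ : ℝ) : ℂ) :=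
  stmt_16_general n w c hw
end

section
/- Let γ ∈ ℂ with |γ| = 1 and let a ∈ ℂ with Re a > 0. Then for every ε > 0 there exists N such that for all natural numbers n ≥ N and all z ∈ 𝔻, |ρ_{γ, n·a}(z) − γ| < ε; that is, the image disks ρ_{γ,n·a}(𝔻) shrink to the point γ as n → ∞. -/
/-!
Let `w = (γ + z)/(γ - z)` be the Cayley image of `z`, so `Re w > 0` on the disk. Since
`ρ_{γ,b}` is translation by `b` in the `w`-coordinate, `ρ_{γ,b}(z) - γ = -2γ / (w + b + 1)`, hence
`|ρ_{γ,b}(z) - γ| ≤ 2 / Re (w + b + 1) < 2 / (1 + Re b)`, which tends to `0` for `b = n a`.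
-/

open Filter Topology

theorem Complex.re_add_div_sub_pos {γ z : ℂ} (hz : ‖z‖ < ‖γ‖) :
    0 < ((γ + z) / (γ - z)).re := by
  have hne : γ - z ≠ 0 := sub_ne_zero.mpr (by rintro rfl; exact hz.false)
  have hnum : (γ + z).re * (γ - z).re + (γ + z).im * (γ - z).im = ‖γ‖ ^ 2 - ‖z‖ ^ 2 := by
    simp only [Complex.sq_norm, Complex.normSq_apply, Complex.add_re, Complex.add_im,
      Complex.sub_re, Complex.sub_im]
    ring
  rw [Complex.div_re, ← add_div, hnum]
  exact div_pos (by nlinarith [norm_nonneg z]) (Complex.normSq_pos.mpr hne)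

theorem rho_sub_eq {γ b z : ℂ} (hz : z ≠ γ) (hw : (γ + z) / (γ - z) + b + 1 ≠ 0) :
    rho γ b z - γ = -2 * γ / ((γ + z) / (γ - z) + b + 1) := by
  have hγz : γ - z ≠ 0 := sub_ne_zero.mpr hz.symm
  have hden : (2 + b) * γ - b * z ≠ 0 := by
    have : (2 + b) * γ - b * z = ((γ + z) / (γ - z) + b + 1) * (γ - z) := by
      field_simp; ring
    rw [this]; exact mul_ne_zero hw hγz
  rw [rho, div_sub' hden, div_eq_div_iff hden hw]
  field_simp
  ring

theorem norm_rho_sub_lt {γ b z : ℂ} (hγ : ‖γ‖ = 1) (hz : ‖z‖ < 1) (hb : -1 < b.re) :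
    ‖rho γ b z - γ‖ < 2 / (1 + b.re) := by
  set w := (γ + z) / (γ - z)
  have hw : 0 < w.re := Complex.re_add_div_sub_pos (hγ ▸ hz)
  have hre : 1 + b.re < (w + b + 1).re := by
    simp only [Complex.add_re, Complex.one_re]
    linarith
  have hnorm : 1 + b.re < ‖w + b + 1‖ := hre.trans_le (Complex.re_le_norm _)
  have hpos : 0 < ‖w + b + 1‖ := by linarith
  have hz' : z ≠ γ := by rintro rfl; exact (hγ ▸ hz).false
  rw [rho_sub_eq hz' (norm_pos_iff.mp hpos), norm_div, norm_mul, norm_neg, hγ, mul_one,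
    Complex.norm_ofNat]
  exact div_lt_div_of_pos_left two_pos (by linarith) hnorm

theorem stmt_17 (γ a : ℂ) (hγ : ‖γ‖ = 1) (ha : 0 < a.re) :
    ∀ ε : ℝ, 0 < ε → ∃ N : ℕ, ∀ n : ℕ, N ≤ n →
      ∀ z ∈ Metric.ball (0 : ℂ) 1, ‖rho γ ((n : ℂ) * a) z - γ‖ < ε := by
  intro ε hε
  have hre (n : ℕ) : ((n : ℂ) * a).re = n * a.re := by simp
  have hlim : Tendsto (fun n : ℕ => 2 / (1 + ((n : ℂ) * a).re)) atTop (𝓝 0) := by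
    simp only [hre]
    exact tendsto_const_nhds.div_atTop
      (tendsto_atTop_add_const_left _ _ (tendsto_natCast_atTop_atTop.atTop_mul_const ha))
  obtain ⟨N, hN⟩ := eventually_atTop.mp (hlim.eventually (gt_mem_nhds hε))
  refine ⟨N, fun n hn z hz =>
    (norm_rho_sub_lt hγ (mem_ball_zero_iff.mp hz) ?_).trans (hN n hn)⟩
  rw [hre]
  linarith [mul_nonneg n.cast_nonneg ha.le]
end
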